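/- Let F : ℝ → ℝ be twice differentiable with |F''| ≤ L. Then for any u, v ∈ ℝ and constant A with Aτ ≥ L, the stabilized term T = F'(u)(v−u) + (1/2)F''(u)(v−u)² + Aτ(v−u)² satisfies T ≥ F(v) − F(u). -/

import Mathlib

/-!
Since `F'' ≤ L`, the function `L/2 · w² - F` is convex and so lies above its tangent lines;
that is, `F` lies below its tangent parabola: `F v - F u ≤ F'(u)(v - u) + L/2 (v - u)²`.
The remaining defect `(F''(u)/2 + Aτ - L/2)(v - u)²` is nonnegative because `F''(u) ≥ -L`
and `Aτ ≥ L`.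
-/

open Set

theorem ConvexOn.add_mul_sub_le_of_hasDerivAt {S : Set ℝ} {f : ℝ → ℝ} {f' x y : ℝ}
    (hf : ConvexOn ℝ S f) (hx : x ∈ S) (hy : y ∈ S) (hfx : HasDerivAt f f' x) :
    f x + f' * (y - x) ≤ f y := by
  rcases lt_trichotomy x y with hxy | rfl | hyx
  · have hslope := hf.le_slope_of_hasDerivAt hx hy hxy hfx
    rw [slope_def_field, le_div_iff₀ (sub_pos.2 hxy)] at hslope
    linarith
  · simp
  · have hslope := hf.slope_le_of_hasDerivAt hy hx hyx hfx
    rw [slope_def_field, div_le_iff₀ (sub_pos.2 hyx)] at hslope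
    linarith

theorem le_add_deriv_mul_sub_add_sq_of_deriv2_le {f : ℝ → ℝ} {L : ℝ}
    (hf : Differentiable ℝ f) (hf' : Differentiable ℝ (deriv f))
    (hL : ∀ z, deriv (deriv f) z ≤ L) (x y : ℝ) :
    f y ≤ f x + deriv f x * (y - x) + L / 2 * (y - x) ^ 2 := by
  set g : ℝ → ℝ := fun w => L / 2 * w ^ 2 - f w
  have hg : ∀ w, HasDerivAt g (L * w - deriv f w) w := fun w => by
    refine (((hasDerivAt_pow 2 w).const_mul (L / 2)).fun_sub (hf w).hasDerivAt).congr_deriv ?_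
    norm_num
    ring
  have hg' : ∀ w, HasDerivAt (fun w => L * w - deriv f w) (L - deriv (deriv f) w) w := fun w => by
    simpa using ((hasDerivAt_id w).const_mul L).fun_sub (hf' w).hasDerivAt
  have hconvex : ConvexOn ℝ univ g :=
    convexOn_of_hasDerivWithinAt2_nonneg (f' := fun w => L * w - deriv f w) convex_univ
      (fun w _ => (hg w).continuousAt.continuousWithinAt) (fun w _ => (hg w).hasDerivWithinAt)
      (fun w _ => (hg' w).hasDerivWithinAt) (fun w _ => sub_nonneg.2 (hL w))
  have htangent := hconvex.add_mul_sub_le_of_hasDerivAt (mem_univ x) (mem_univ y) (hg x)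
  simp only [g] at htangent
  linear_combination htangent

theorem stabilized_term_estimate (F : ℝ → ℝ) (L A τ : ℝ)
    (hF : Differentiable ℝ F) (hF' : Differentiable ℝ (deriv F))
    (hL : ∀ z, |deriv (deriv F) z| ≤ L)
    (hAτ : A * τ ≥ L) (u v : ℝ) :
    deriv F u * (v - u) + (1 / 2) * deriv (deriv F) u * (v - u) ^ 2
      + A * τ * (v - u) ^ 2 ≥ F v - F u := by
  have htaylor :=
    le_add_deriv_mul_sub_add_sq_of_deriv2_le hF hF' (fun z => (abs_le.1 (hL z)).2) u v
  have hlower : 0 ≤ deriv (deriv F) u + L := by linarith [(abs_le.1 (hL u)).1]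
  nlinarith [mul_nonneg hlower (sq_nonneg (v - u)),
    mul_nonneg (sub_nonneg.2 hAτ) (sq_nonneg (v - u))]
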